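/- arXiv:2104.07628 — 9 statements merged into one kernel-verified Lean document; each statement's English description precedes it below -/
import Mathlib

section
/- If U is a unitary operator on a Hilbert space H and V1, V2 are isometries on H commuting with U such that V1* V2 = U* V2 V1*, then V1 V2 = U V2 V1. -/
set_option maxHeartbeats 1000000

open ContinuousLinearMap

theorem stmt_0 {H : Type*} [NormedAddCommGroup H] [InnerProductSpace ℂ H] [CompleteSpace H]
    (U V1 V2 : H →L[ℂ] H)
    (hU1 : U * adjoint U = 1) (hU2 : adjoint U * U = 1)
    (hV1 : adjoint V1 * V1 = 1) (hV2 : adjoint V2 * V2 = 1)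
    (hc1 : V1 * U = U * V1) (hc2 : V2 * U = U * V2)
    (ht : adjoint V1 * V2 = adjoint U * (V2 * adjoint V1)) :
    V1 * V2 = U * (V2 * V1) := by
  -- derived commutation relations with adjoints
  have hc1' : adjoint U * adjoint V1 = adjoint V1 * adjoint U := by
    have := congrArg star hc1
    simpa [star_mul, star_eq_adjoint] using this
  have hUV1 : adjoint U * V1 = V1 * adjoint U := by
    calc adjoint U * V1 = adjoint U * V1 * (U * adjoint U) := by rw [hU1, mul_one]
    _ = adjoint U * (V1 * U) * adjoint U := by noncomm_ring
    _ = adjoint U * (U * V1) * adjoint U := by rw [hc1]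
    _ = (adjoint U * U) * (V1 * adjoint U) := by noncomm_ring
    _ = V1 * adjoint U := by rw [hU2, one_mul]
  have hV1U : adjoint V1 * U = U * adjoint V1 := by
    calc adjoint V1 * U = (U * adjoint U) * (adjoint V1 * U) := by rw [hU1, one_mul]
    _ = U * (adjoint U * adjoint V1) * U := by noncomm_ring
    _ = U * (adjoint V1 * adjoint U) * U := by rw [hc1']
    _ = U * adjoint V1 * (adjoint U * U) := by noncomm_ring
    _ = U * adjoint V1 := by rw [hU2, mul_one]
  have ht' : adjoint V2 * V1 = V1 * (adjoint V2 * U) := by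
    have := congrArg star ht
    simpa [star_mul, star_eq_adjoint, adjoint_adjoint, mul_assoc] using this
  set A := V1 * V2 - U * (V2 * V1) with hA
  have hstar : star A * A = 0 := by
    have hsA : star A = adjoint V2 * adjoint V1 - adjoint V1 * adjoint V2 * adjoint U := by
      simp only [hA, star_sub, star_mul, star_eq_adjoint, mul_assoc]
    have T1 : (adjoint V2 * adjoint V1) * (V1 * V2) = 1 := by
      calc (adjoint V2 * adjoint V1) * (V1 * V2)
          = adjoint V2 * (adjoint V1 * V1) * V2 := by noncomm_ring
        _ = 1 := by rw [hV1]; rw [mul_one]; exact hV2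
    have T2 : (adjoint V2 * adjoint V1) * (U * (V2 * V1)) = 1 := by
      calc (adjoint V2 * adjoint V1) * (U * (V2 * V1))
          = adjoint V2 * (adjoint V1 * U) * V2 * V1 := by noncomm_ring
        _ = adjoint V2 * (U * adjoint V1) * V2 * V1 := by rw [hV1U]
        _ = adjoint V2 * U * (adjoint V1 * V2) * V1 := by noncomm_ring
        _ = adjoint V2 * U * (adjoint U * (V2 * adjoint V1)) * V1 := by rw [ht]
        _ = adjoint V2 * (U * adjoint U) * V2 * (adjoint V1 * V1) := by noncomm_ring
        _ = 1 := by rw [hU1, hV1, mul_one, mul_one]; exact hV2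
    have T3 : (adjoint V1 * adjoint V2 * adjoint U) * (V1 * V2) = 1 := by
      calc (adjoint V1 * adjoint V2 * adjoint U) * (V1 * V2)
          = adjoint V1 * adjoint V2 * (adjoint U * V1) * V2 := by noncomm_ring
        _ = adjoint V1 * adjoint V2 * (V1 * adjoint U) * V2 := by rw [hUV1]
        _ = adjoint V1 * (adjoint V2 * V1) * (adjoint U * V2) := by noncomm_ring
        _ = adjoint V1 * (V1 * (adjoint V2 * U)) * (adjoint U * V2) := by rw [ht']
        _ = (adjoint V1 * V1) * adjoint V2 * (U * adjoint U) * V2 := by noncomm_ring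
        _ = 1 := by rw [hV1, hU1, one_mul, mul_one]; exact hV2
    have T4 : (adjoint V1 * adjoint V2 * adjoint U) * (U * (V2 * V1)) = 1 := by
      calc (adjoint V1 * adjoint V2 * adjoint U) * (U * (V2 * V1))
          = adjoint V1 * adjoint V2 * (adjoint U * U) * V2 * V1 := by noncomm_ring
        _ = adjoint V1 * (adjoint V2 * V2) * V1 := by rw [hU2, mul_one, mul_assoc (adjoint V1)]
        _ = 1 := by rw [hV2, mul_one]; exact hV1
    rw [hsA, hA]
    calc (adjoint V2 * adjoint V1 - adjoint V1 * adjoint V2 * adjoint U) *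
          (V1 * V2 - U * (V2 * V1))
        = (adjoint V2 * adjoint V1) * (V1 * V2)
          - (adjoint V2 * adjoint V1) * (U * (V2 * V1))
          - (adjoint V1 * adjoint V2 * adjoint U) * (V1 * V2)
          + (adjoint V1 * adjoint V2 * adjoint U) * (U * (V2 * V1)) := by noncomm_ring
      _ = 0 := by rw [T1, T2, T3, T4]; abel
  have : A = 0 := by
    have := CStarRing.star_mul_self_eq_zero_iff A
    exact this.mp hstar
  have := sub_eq_zero.mp this
  exact this
end

section
/- Let {U_{ij}} be unitaries on H (i ≠ j in a finite index set) with U_{ji} = U_{ij}*, and let (V1,…,Vn) be isometries on H, each commuting with every U_{st}, satisfying V_i* V_j = U_{ij}* V_j V_i* for all i ≠ j. Then U_{ij} U_{st} = U_{st} U_{ij} for all i ≠ j and s ≠ t. -/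
open ContinuousLinearMap

theorem stmt_3 {H : Type*} [NormedAddCommGroup H] [InnerProductSpace ℂ H] [CompleteSpace H]
    {n : ℕ} (U : Fin n → Fin n → (H →L[ℂ] H)) (V : Fin n → (H →L[ℂ] H))
    (hUu : ∀ i j, i ≠ j → U i j * adjoint (U i j) = 1 ∧ adjoint (U i j) * U i j = 1)
    (hUsym : ∀ i j, i ≠ j → U j i = adjoint (U i j))
    (hViso : ∀ i, adjoint (V i) * V i = 1)
    (hVU : ∀ p s t, s ≠ t → V p * U s t = U s t * V p)
    (htw : ∀ i j, i ≠ j → adjoint (V i) * V j = adjoint (U i j) * (V j * adjoint (V i))) :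
    ∀ i j s t, i ≠ j → s ≠ t → U i j * U s t = U s t * U i j := by
  intro i j s t hij hst
  simp only [← ContinuousLinearMap.star_eq_adjoint] at hUu hUsym hViso htw
  -- adjoints of the V's also commute with the U's
  have hVstarU : ∀ p a b, a ≠ b → star (V p) * U a b = U a b * star (V p) := by
    intro p a b hab
    have h := congrArg star (hVU p a b hab)
    rw [star_mul, star_mul] at h
    calc star (V p) * U a b
        = 1 * (star (V p) * U a b) := (one_mul _).symm
      _ = U a b * star (U a b) * (star (V p) * U a b) := by rw [(hUu a b hab).1]
      _ = U a b * ((star (U a b) * star (V p)) * U a b) := by simp only [mul_assoc]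
      _ = U a b * ((star (V p) * star (U a b)) * U a b) := by rw [← h]
      _ = U a b * star (V p) * (star (U a b) * U a b) := by simp only [mul_assoc]
      _ = U a b * star (V p) := by rw [(hUu a b hab).2, mul_one]
  -- the twist relation for the pair (j, i)
  have h1 : star (V j) * V i = U i j * (V i * star (V j)) := by
    have h := htw j i hij.symm
    rw [hUsym i j hij, star_star] at h
    exact h
  -- commute U s t through both sides of h1
  have h2 : U s t * (U i j * (V i * star (V j))) = U i j * (U s t * (V i * star (V j))) := by
    calc U s t * (U i j * (V i * star (V j)))
        = U s t * (star (V j) * V i) := by rw [← h1]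
      _ = (U s t * star (V j)) * V i := by rw [mul_assoc]
      _ = (star (V j) * U s t) * V i := by rw [hVstarU j s t hst]
      _ = star (V j) * (U s t * V i) := by rw [mul_assoc]
      _ = star (V j) * (V i * U s t) := by rw [hVU i s t hst]
      _ = (star (V j) * V i) * U s t := by rw [mul_assoc]
      _ = (U i j * (V i * star (V j))) * U s t := by rw [h1]
      _ = U i j * (V i * (star (V j) * U s t)) := by simp only [mul_assoc]
      _ = U i j * (V i * (U s t * star (V j))) := by rw [hVstarU j s t hst]
      _ = U i j * ((V i * U s t) * star (V j)) := by simp only [mul_assoc]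
      _ = U i j * ((U s t * V i) * star (V j)) := by rw [hVU i s t hst]
      _ = U i j * (U s t * (V i * star (V j))) := by simp only [mul_assoc]
  -- cancel star (V j) against V j on the right
  have h3 : U s t * (U i j * V i) = U i j * (U s t * V i) := by
    have h := congrArg (fun X => X * V j) h2
    simp only [mul_assoc] at h
    simp only [hViso j, mul_one] at h
    exact h
  -- move V i to the left on both sides
  have h4 : V i * (U s t * U i j) = V i * (U i j * U s t) := by
    calc V i * (U s t * U i j)
        = (V i * U s t) * U i j := by rw [mul_assoc]
      _ = (U s t * V i) * U i j := by rw [hVU i s t hst]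
      _ = U s t * (V i * U i j) := by rw [mul_assoc]
      _ = U s t * (U i j * V i) := by rw [hVU i i j hij]
      _ = U i j * (U s t * V i) := h3
      _ = U i j * (V i * U s t) := by rw [← hVU i s t hst]
      _ = (U i j * V i) * U s t := by rw [mul_assoc]
      _ = (V i * U i j) * U s t := by rw [← hVU i i j hij]
      _ = V i * (U i j * U s t) := by rw [mul_assoc]
  -- cancel V i on the left using the isometry property
  have h := congrArg (fun X => star (V i) * X) h4
  simp only [← mul_assoc, hViso i, one_mul] at h
  exact h.symm
end

section
/- Let (V1,…,Vn) be a U_n-twisted isometry on H, A a subset of the index set, and W_A = ⋂_{i∈A} ker V_i*. Then for every j ∉ A, V_j maps W_A into W_A and V_j* maps W_A into W_A; i.e., W_A reduces V_j. -/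
/-!
For `i ∈ A`, the relation `Vᵢ⋆ Vⱼ = Uᵢⱼ⋆ Vⱼ Vᵢ⋆` shows at once that `Vⱼ` preserves `ker Vᵢ⋆`.
For `Vⱼ⋆` one needs the twisted commutation `Vⱼ Vᵢ = Uᵢⱼ⋆ Vᵢ Vⱼ`: both sides are isometries and
`(Vⱼ Vᵢ)⋆ (Uᵢⱼ⋆ Vᵢ Vⱼ) = 1`, which forces equality in a C⋆-algebra. Its adjoint reads
`Vᵢ⋆ Vⱼ⋆ = Vⱼ⋆ Uᵢⱼ Vᵢ⋆`, so `Vⱼ⋆` preserves `ker Vᵢ⋆` as well.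
-/

open ContinuousLinearMap

section CStarRing

variable {R : Type*} [NormedRing R] [StarRing R] [CStarRing R]

-- `(s - t)⋆ (s - t) = 1 - 1 - 1 + 1 = 0`
theorem eq_of_star_mul_eq_one {s t : R} (hs : star s * s = 1) (ht : star t * t = 1)
    (hst : star s * t = 1) : s = t := by
  have hts : star t * s = 1 := by simpa using congrArg star hst
  rw [← sub_eq_zero, ← CStarRing.star_mul_self_eq_zero_iff, star_sub]
  simp only [sub_mul, mul_sub, hs, ht, hst, hts, sub_self]

theorem mul_eq_star_mul_mul_of_star_mul_eq {a b u : R} (ha : star a * a = 1)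
    (hb : star b * b = 1) (hu : u ∈ unitary R) (hbu : Commute b u)
    (hba : star b * a = u * (a * star b)) : b * a = star u * (a * b) := by
  have hbu' : star b * star u = star u * star b := hbu.star_star.eq
  refine eq_of_star_mul_eq_one ?_ ?_ ?_
  · calc star (b * a) * (b * a) = star a * (star b * b) * a := by
          simp only [star_mul, mul_assoc]
      _ = 1 := by rw [hb, mul_one, ha]
  · calc star (star u * (a * b)) * (star u * (a * b))
          = star b * (star a * (u * star u) * a) * b := by
          simp only [star_mul, star_star, mul_assoc]
      _ = 1 := by rw [Unitary.mul_star_self_of_mem hu, mul_one, ha, mul_one, hb]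
  · calc star (b * a) * (star u * (a * b)) = star a * (star u * (star b * a)) * b := by
          simp only [star_mul, mul_assoc]
          rw [← mul_assoc (star b), hbu', mul_assoc]
      _ = star a * (star u * u) * a * (star b * b) := by
          rw [hba]; simp only [mul_assoc]
      _ = 1 := by rw [Unitary.star_mul_self_of_mem hu, hb, mul_one, mul_one, ha]

end CStarRing

theorem star_mul_star_eq_of_mul_eq {R : Type*} [Monoid R] [StarMul R] {a b u : R}
    (hau : Commute a (star u)) (h : b * a = star u * (a * b)) :
    star a * star b = star b * (u * star a) := by
  have hau' : star a * u = u * star a := by simpa using hau.star_star.eq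
  rw [← star_mul, h]
  simp only [star_mul, star_star, mul_assoc, hau']

theorem stmt_4_general {H : Type*} [NormedAddCommGroup H] [InnerProductSpace ℂ H] [CompleteSpace H]
    {n : ℕ} (U : Fin n → Fin n → (H →L[ℂ] H)) (V : Fin n → (H →L[ℂ] H))
    (hUu : ∀ i j, i ≠ j → U i j * adjoint (U i j) = 1 ∧ adjoint (U i j) * U i j = 1)
    (hUsym : ∀ i j, i ≠ j → U j i = adjoint (U i j))
    (hViso : ∀ i, adjoint (V i) * V i = 1)
    (hVU : ∀ p s t, s ≠ t → V p * U s t = U s t * V p)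
    (htw : ∀ i j, i ≠ j → adjoint (V i) * V j = adjoint (U i j) * (V j * adjoint (V i)))
    (A : Set (Fin n))
    (W : Submodule ℂ H) (hW : W = ⨅ i ∈ A, LinearMap.ker (adjoint (V i) : H →ₗ[ℂ] H)) :
    ∀ j ∉ A, ∀ x ∈ W, V j x ∈ W ∧ adjoint (V j) x ∈ W := by
  simp only [← star_eq_adjoint] at *
  intro j hj x hx
  subst hW
  simp only [Submodule.mem_iInf, LinearMap.mem_ker, coe_coe] at hx ⊢
  refine ⟨fun i hi => ?_, fun i hi => ?_⟩
  all_goals have hij : i ≠ j := ne_of_mem_of_not_mem hi hj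
  · change (star (V i) * V j) x = 0
    rw [htw i j hij, mul_apply_eq_comp, mul_apply_eq_comp, hx i hi, map_zero, map_zero]
  · have hunitary : U i j ∈ unitary (H →L[ℂ] H) := (hUu i j hij).symm
    have htwist : V j * V i = star (U i j) * (V i * V j) := by
      refine mul_eq_star_mul_mul_of_star_mul_eq (hViso i) (hViso j) hunitary (hVU j i j hij) ?_
      simpa [hUsym i j hij] using htw j i hij.symm
    have hcomm : Commute (V i) (star (U i j)) := by
      rw [← hUsym i j hij]
      exact hVU i j i hij.symm
    change (star (V i) * star (V j)) x = 0
    rw [star_mul_star_eq_of_mul_eq hcomm htwist, mul_apply_eq_comp, mul_apply_eq_comp, hx i hi,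
      map_zero, map_zero]

theorem stmt_4 {H : Type*} [NormedAddCommGroup H] [InnerProductSpace ℂ H] [CompleteSpace H]
    {n : ℕ} (U : Fin n → Fin n → (H →L[ℂ] H)) (V : Fin n → (H →L[ℂ] H))
    (hUu : ∀ i j, i ≠ j → U i j * adjoint (U i j) = 1 ∧ adjoint (U i j) * U i j = 1)
    (hUsym : ∀ i j, i ≠ j → U j i = adjoint (U i j))
    (hUcomm : ∀ i j s t, i ≠ j → s ≠ t → U i j * U s t = U s t * U i j)
    (hViso : ∀ i, adjoint (V i) * V i = 1)
    (hVU : ∀ p s t, s ≠ t → V p * U s t = U s t * V p)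
    (htw : ∀ i j, i ≠ j → adjoint (V i) * V j = adjoint (U i j) * (V j * adjoint (V i)))
    (A : Set (Fin n))
    (W : Submodule ℂ H) (hW : W = ⨅ i ∈ A, LinearMap.ker (adjoint (V i) : H →ₗ[ℂ] H)) :
    ∀ j ∉ A, ∀ x ∈ W, V j x ∈ W ∧ adjoint (V j) x ∈ W :=
  stmt_4_general U V hUu hUsym hViso hVU htw A W hW
end

section
/- Let (V1,…,Vn) be a U_n-twisted isometry on H and A ⊆ {1,…,n}. Then W_A = ⋂_{i∈A} ker V_i* reduces each U_{ij}, and moreover U_{ij}(W_A) = W_A for all i ≠ j. -/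
open ContinuousLinearMap

section Invariance

variable {R M : Type*} [Semiring R] [TopologicalSpace M] [AddCommMonoid M] [Module R M]

theorem ContinuousLinearMap.apply_mem_iInf_ker_of_commute {ι : Type*} (f : ι → M →L[R] M)
    (s : Set ι) {T : M →L[R] M} (hT : ∀ i ∈ s, Commute (f i) T) {x : M}
    (hx : x ∈ ⨅ i ∈ s, LinearMap.ker (f i).toLinearMap) :
    T x ∈ ⨅ i ∈ s, LinearMap.ker (f i).toLinearMap := by
  simp only [Submodule.mem_iInf, LinearMap.mem_ker, coe_coe] at hx ⊢
  intro i hi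
  rw [← mul_apply_eq_comp, hT i hi, mul_apply_eq_comp, hx i hi, map_zero]

theorem ContinuousLinearMap.map_eq_of_mul_eq_one {T S : M →L[R] M} (hTS : T * S = 1)
    {W : Submodule R M} (hT : ∀ x ∈ W, T x ∈ W) (hS : ∀ x ∈ W, S x ∈ W) :
    W.map T.toLinearMap = W := by
  refine le_antisymm (Submodule.map_le_iff_le_comap.mpr hT) fun x hx => ⟨S x, hS x hx, ?_⟩
  rw [coe_coe, ← mul_apply_eq_comp, hTS, one_apply_eq_self]

end Invariance

theorem stmt_6_general {H : Type*} [NormedAddCommGroup H] [InnerProductSpace ℂ H] [CompleteSpace H]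
    {n : ℕ} (U : Fin n → Fin n → (H →L[ℂ] H)) (V : Fin n → (H →L[ℂ] H))
    (hUu : ∀ i j, i ≠ j → U i j * adjoint (U i j) = 1 ∧ adjoint (U i j) * U i j = 1)
    (hUsym : ∀ i j, i ≠ j → U j i = adjoint (U i j))
    (hVU : ∀ p s t, s ≠ t → V p * U s t = U s t * V p)
    (A : Set (Fin n))
    (W : Submodule ℂ H) (hW : W = ⨅ i ∈ A, LinearMap.ker (adjoint (V i)).toLinearMap) :
    ∀ i j, i ≠ j →
      (∀ x ∈ W, U i j x ∈ W ∧ adjoint (U i j) x ∈ W) ∧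
        Submodule.map (U i j).toLinearMap W = W := by
  intro i j hij
  have hcomm : ∀ k, Commute (adjoint (V k)) (U i j) := fun k => by
    have h : Commute (V k) (adjoint (U i j)) := hUsym i j hij ▸ hVU k j i hij.symm
    simpa only [star_eq_adjoint, adjoint_adjoint] using h.star_star
  have hcomm_adjoint : ∀ k, Commute (adjoint (V k)) (adjoint (U i j)) := fun k => by
    simpa only [star_eq_adjoint] using Commute.star_star (hVU k i j hij)
  have hinv : ∀ x ∈ W, U i j x ∈ W ∧ adjoint (U i j) x ∈ W := by
    subst hW
    exact fun x hx =>
      ⟨apply_mem_iInf_ker_of_commute _ A (fun k _ => hcomm k) hx,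
        apply_mem_iInf_ker_of_commute _ A (fun k _ => hcomm_adjoint k) hx⟩
  exact ⟨hinv, map_eq_of_mul_eq_one (hUu i j hij).1 (fun x hx => (hinv x hx).1)
    (fun x hx => (hinv x hx).2)⟩

theorem stmt_6 {H : Type*} [NormedAddCommGroup H] [InnerProductSpace ℂ H] [CompleteSpace H]
    {n : ℕ} (U : Fin n → Fin n → (H →L[ℂ] H)) (V : Fin n → (H →L[ℂ] H))
    (hUu : ∀ i j, i ≠ j → U i j * adjoint (U i j) = 1 ∧ adjoint (U i j) * U i j = 1)
    (hUsym : ∀ i j, i ≠ j → U j i = adjoint (U i j))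
    (hUcomm : ∀ i j s t, i ≠ j → s ≠ t → U i j * U s t = U s t * U i j)
    (hViso : ∀ i, adjoint (V i) * V i = 1)
    (hVU : ∀ p s t, s ≠ t → V p * U s t = U s t * V p)
    (htw : ∀ i j, i ≠ j → adjoint (V i) * V j = adjoint (U i j) * (V j * adjoint (V i)))
    (A : Set (Fin n))
    (W : Submodule ℂ H) (hW : W = ⨅ i ∈ A, LinearMap.ker (adjoint (V i)).toLinearMap) :
    ∀ i j, i ≠ j →
      (∀ x ∈ W, U i j x ∈ W ∧ adjoint (U i j) x ∈ W) ∧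
        Submodule.map (U i j).toLinearMap W = W :=
  stmt_6_general U V hUu hUsym hVU A W hW
end

section
/- Let λ be on the unit circle, and on H = ℓ²(ℕ²) ⊕ ℓ²(ℕ²) define S1 = S ⊗ 1, S2 = D[λ] ⊗ S (acting on ℓ²(ℕ²) ≅ ℓ²(ℕ) ⊗ ℓ²(ℕ)), V1 = diag(S1, S2), V2 = diag(S2, S1), and U = diag(conj(λ)·1, λ·1). Then V1, V2 are isometries, U is unitary, V1 and V2 commute with U, and V1* V2 = U* V2 V1*. -/
/-!
All the operators are weighted shifts `e i ↦ c i • e (σ i)` on the standard basis of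
`ℓ²(Bool × ℕ × ℕ)` with `σ` injective and unimodular weights, `U` being the one with `σ = id`.
The adjoint of such a shift is `f ↦ conj c * (f ∘ σ)`, which gives the isometry and unitarity
claims at once. `V1` and `V2` preserve the two summands, on which `U` is a scalar, so they commute
with `U`. The last identity is a coordinate computation resting on `λ * λ ^ p = λ ^ (p + 1)`.
-/

open ContinuousLinearMap
open scoped ComplexConjugate

local notation "ℓ²(" ι ", " 𝕜 ")" => lp (fun _ : ι => 𝕜) 2

section WeightedShift

variable {ι 𝕜 : Type*} [RCLike 𝕜]

/-- `V` is the weighted shift `e i ↦ c i • e (σ i)`. -/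
structure IsWeightedShift (V : ℓ²(ι, 𝕜) →L[𝕜] ℓ²(ι, 𝕜)) (σ : ι → ι) (c : ι → 𝕜) : Prop where
  apply_apply : ∀ f i, V f (σ i) = c i * f i
  apply_eq_zero_of_notMem_range : ∀ f j, j ∉ Set.range σ → V f j = 0

theorem ContinuousLinearMap.ext_lp {A B : ℓ²(ι, 𝕜) →L[𝕜] ℓ²(ι, 𝕜)}
    (h : ∀ f i, A f i = B f i) : A = B :=
  ContinuousLinearMap.ext fun f => lp.ext (funext (h f))

namespace IsWeightedShift

variable {V U : ℓ²(ι, 𝕜) →L[𝕜] ℓ²(ι, 𝕜)} {σ : ι → ι} {c d : ι → 𝕜}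

theorem apply_single [DecidableEq ι] (hV : IsWeightedShift V σ c) (hσ : σ.Injective) (i : ι) :
    V (lp.single 2 i (1 : 𝕜)) = c i • lp.single 2 (σ i) (1 : 𝕜) := by
  ext j
  by_cases hj : j ∈ Set.range σ
  · obtain ⟨k, rfl⟩ := hj
    by_cases hki : k = i
    · subst hki
      simp [hV.apply_apply]
    · simp [hV.apply_apply, hki, hσ.ne hki]
  · have hji : j ≠ σ i := fun h => hj ⟨i, h.symm⟩
    simp [hV.apply_eq_zero_of_notMem_range _ _ hj, hji]

theorem adjoint_apply (hV : IsWeightedShift V σ c) (hσ : σ.Injective) (f : ℓ²(ι, 𝕜)) (i : ι) :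
    adjoint V f i = conj (c i) * f (σ i) := by
  classical
  have inner_single : ∀ (g : ℓ²(ι, 𝕜)) k, inner 𝕜 (lp.single 2 k (1 : 𝕜) : ℓ²(ι, 𝕜)) g = g k :=
    fun g k => by simp [lp.inner_single_left]
  rw [← inner_single, adjoint_inner_right, hV.apply_single hσ, inner_smul_left, inner_single]

theorem adjoint_mul_self (hV : IsWeightedShift V σ c) (hσ : σ.Injective) (hc : ∀ i, ‖c i‖ = 1) :
    adjoint V * V = 1 := by
  refine ext_lp fun f i => ?_
  simp [hV.adjoint_apply hσ, hV.apply_apply, ← mul_assoc, RCLike.conj_mul, hc]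

theorem mul_adjoint_self (hV : IsWeightedShift V σ c) (hσ : σ.Bijective) (hc : ∀ i, ‖c i‖ = 1) :
    V * adjoint V = 1 := by
  refine ext_lp fun f j => ?_
  obtain ⟨i, rfl⟩ := hσ.surjective j
  simp [hV.adjoint_apply hσ.injective, hV.apply_apply, ← mul_assoc, RCLike.mul_conj, hc]

theorem mul_comm_of_diagonal (hV : IsWeightedShift V σ c) (hU : IsWeightedShift U id d)
    (hd : ∀ i, d (σ i) = d i) : V * U = U * V := by
  have hU_apply : ∀ g k, U g k = d k * g k := hU.apply_apply
  refine ext_lp fun f j => ?_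
  by_cases hj : j ∈ Set.range σ
  · obtain ⟨i, rfl⟩ := hj
    simp only [mul_apply_eq_comp, hU_apply, hV.apply_apply, hd]
    ring
  · simp [hU_apply, hV.apply_eq_zero_of_notMem_range _ _ hj]

end IsWeightedShift

end WeightedShift

section DiagonalShifts

/- `diagShiftIndex b` and `diagShiftWeight lam b` describe `diag(S ⊗ 1, D[λ] ⊗ S)` with `S ⊗ 1`
acting on the summand `b`, so `V1` has `b = false` and `V2` has `b = true`. -/

def diagShiftIndex (b : Bool) : Bool × ℕ × ℕ → Bool × ℕ × ℕ
  | (a, p, q) => if a = b then (a, p + 1, q) else (a, p, q + 1)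

def diagShiftWeight (lam : ℂ) (b : Bool) : Bool × ℕ × ℕ → ℂ
  | (a, p, _) => if a = b then 1 else lam ^ p

def diagPhase (lam : ℂ) : Bool × ℕ × ℕ → ℂ
  | (a, _, _) => if a then lam else conj lam

theorem diagShiftIndex_injective (b : Bool) : (diagShiftIndex b).Injective := by
  rintro ⟨a, p, q⟩ ⟨a', p', q'⟩ h
  cases a <;> cases a' <;> cases b <;> simp_all [diagShiftIndex]

theorem norm_diagShiftWeight {lam : ℂ} (hlam : ‖lam‖ = 1) (b : Bool) (i : Bool × ℕ × ℕ) :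
    ‖diagShiftWeight lam b i‖ = 1 := by
  obtain ⟨a, p, q⟩ := i
  cases a <;> cases b <;> simp [diagShiftWeight, hlam]

theorem norm_diagPhase {lam : ℂ} (hlam : ‖lam‖ = 1) (i : Bool × ℕ × ℕ) :
    ‖diagPhase lam i‖ = 1 := by
  obtain ⟨a, p, q⟩ := i
  cases a <;> simp [diagPhase, hlam]

theorem diagPhase_diagShiftIndex (lam : ℂ) (b : Bool) (i : Bool × ℕ × ℕ) :
    diagPhase lam (diagShiftIndex b i) = diagPhase lam i := by
  obtain ⟨a, p, q⟩ := i
  cases a <;> cases b <;> rfl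

variable {lam : ℂ} {V W U : ℓ²(Bool × ℕ × ℕ, ℂ) →L[ℂ] ℓ²(Bool × ℕ × ℕ, ℂ)}

theorem isWeightedShift_diagShift (b : Bool)
    (hS1 : ∀ f (p q : ℕ), V f (b, p, q) = if p = 0 then 0 else f (b, p - 1, q))
    (hS2 : ∀ f (p q : ℕ), V f (!b, p, q) = lam ^ p * (if q = 0 then 0 else f (!b, p, q - 1))) :
    IsWeightedShift V (diagShiftIndex b) (diagShiftWeight lam b) where
  apply_apply f := by
    rintro ⟨a, p, q⟩
    by_cases hab : a = b
    · subst hab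
      simp [diagShiftIndex, diagShiftWeight, hS1]
    · obtain rfl : a = !b := by cases a <;> cases b <;> simp_all
      simp [diagShiftIndex, diagShiftWeight, hS2]
  apply_eq_zero_of_notMem_range f := by
    rintro ⟨a, p, q⟩ hj
    by_cases hab : a = b
    · subst hab
      obtain rfl : p = 0 := by
        by_contra hp
        exact hj ⟨(a, p - 1, q), by simp [diagShiftIndex]; omega⟩
      simp [hS1]
    · obtain rfl : a = !b := by cases a <;> cases b <;> simp_all
      obtain rfl : q = 0 := by
        by_contra hq
        exact hj ⟨(!b, p, q - 1), by simp [diagShiftIndex]; omega⟩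
      simp [hS2]

theorem isWeightedShift_diagPhase
    (hUf : ∀ f (p q : ℕ), U f (false, p, q) = conj lam * f (false, p, q))
    (hUt : ∀ f (p q : ℕ), U f (true, p, q) = lam * f (true, p, q)) :
    IsWeightedShift U id (diagPhase lam) where
  apply_apply f := by
    rintro ⟨_ | _, p, q⟩
    · exact hUf f p q
    · exact hUt f p q
  apply_eq_zero_of_notMem_range _ _ hj := absurd (Set.mem_range_self _) hj

theorem adjoint_mul_eq_adjoint_mul_mul_adjoint
    (hV : IsWeightedShift V (diagShiftIndex false) (diagShiftWeight lam false))
    (hWf : ∀ f (p q : ℕ),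
      W f (false, p, q) = lam ^ p * (if q = 0 then 0 else f (false, p, q - 1)))
    (hWt : ∀ f (p q : ℕ), W f (true, p, q) = if p = 0 then 0 else f (true, p - 1, q))
    (hU : IsWeightedShift U id (diagPhase lam)) :
    adjoint V * W = adjoint U * (W * adjoint V) := by
  have hV_adj := hV.adjoint_apply (diagShiftIndex_injective false)
  refine ext_lp fun f => ?_
  rintro ⟨_ | _, p, q⟩
  all_goals simp only [mul_apply_eq_comp, hV_adj, hU.adjoint_apply Function.injective_id, id]
  · rcases q with _ | q
    · simp [diagShiftIndex, hWf]
    · simp [diagShiftIndex, diagShiftWeight, diagPhase, hWf, hV_adj]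
      ring
  · rcases p with _ | p
    · simp [diagShiftIndex, hWt]
    · simp [diagShiftIndex, diagShiftWeight, diagPhase, hWt, hV_adj]
      ring

end DiagonalShifts

/-- On `H = ℓ²(ℕ²) ⊕ ℓ²(ℕ²)` (modeled as `ℓ²(Bool × ℕ × ℕ)`, with `false` the first
summand), let `S1 = S ⊗ 1`, `S2 = D[λ] ⊗ S`, `V1 = diag(S1, S2)`, `V2 = diag(S2, S1)`,
`U = diag(conj λ · 1, λ · 1)`.  Then `V1, V2` are isometries, `U` is unitary, `V1, V2`
commute with `U`, and `V1* V2 = U* V2 V1*`. -/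
theorem stmt_12 (lam : ℂ) (hlam : ‖lam‖ = 1)
    (V1 V2 U : lp (fun _ : Bool × ℕ × ℕ => ℂ) 2 →L[ℂ] lp (fun _ : Bool × ℕ × ℕ => ℂ) 2)
    -- V1 acts as S1 = S ⊗ 1 on the first summand:
    (hV1f : ∀ f (p q : ℕ), V1 f (false, p, q) = if p = 0 then 0 else f (false, p - 1, q))
    -- and as S2 = D[λ] ⊗ S on the second summand:
    (hV1t : ∀ f (p q : ℕ),
      V1 f (true, p, q) = lam ^ p * (if q = 0 then 0 else f (true, p, q - 1)))
    -- V2 acts as S2 on the first summand and S1 on the second: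
    (hV2f : ∀ f (p q : ℕ),
      V2 f (false, p, q) = lam ^ p * (if q = 0 then 0 else f (false, p, q - 1)))
    (hV2t : ∀ f (p q : ℕ), V2 f (true, p, q) = if p = 0 then 0 else f (true, p - 1, q))
    -- U = diag(conj λ · 1, λ · 1):
    (hUf : ∀ f (p q : ℕ), U f (false, p, q) = (starRingEnd ℂ) lam * f (false, p, q))
    (hUt : ∀ f (p q : ℕ), U f (true, p, q) = lam * f (true, p, q)) :
    adjoint V1 * V1 = 1 ∧ adjoint V2 * V2 = 1 ∧
      U * adjoint U = 1 ∧ adjoint U * U = 1 ∧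
      V1 * U = U * V1 ∧ V2 * U = U * V2 ∧
      adjoint V1 * V2 = adjoint U * (V2 * adjoint V1) := by
  have hV1 := isWeightedShift_diagShift false hV1f hV1t
  have hV2 := isWeightedShift_diagShift true hV2t hV2f
  have hU := isWeightedShift_diagPhase hUf hUt
  have hUid : Function.Bijective (id : Bool × ℕ × ℕ → Bool × ℕ × ℕ) := Function.bijective_id
  refine ⟨hV1.adjoint_mul_self (diagShiftIndex_injective _) (norm_diagShiftWeight hlam _),
    hV2.adjoint_mul_self (diagShiftIndex_injective _) (norm_diagShiftWeight hlam _),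
    hU.mul_adjoint_self hUid (norm_diagPhase hlam),
    hU.adjoint_mul_self hUid.injective (norm_diagPhase hlam),
    hV1.mul_comm_of_diagonal hU (diagPhase_diagShiftIndex lam _),
    hV2.mul_comm_of_diagonal hU (diagPhase_diagShiftIndex lam _),
    adjoint_mul_eq_adjoint_mul_mul_adjoint hV1 hV2f hV2t hU⟩
end

section
/- Let V be an isometry on H, and let H_s = closure of span of ⋃_{j≥0} V^j(ker V*). If S is a closed subspace reducing V such that V restricted to S is a shift (V*^m → 0 strongly on S), then S ⊆ H_s. -/
/-!
Since `V* V = 1`, the operator `1 - V V*` maps into `ker V*`, so telescoping gives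
`x - V^m V*^m x = ∑_{j<m} V^j (1 - V V*) V*^j x ∈ ⨆ j, V^j (ker V*)`.
As `V^m` is isometric, `‖V^m V*^m x‖ = ‖V*^m x‖ → 0` for `x ∈ S`, so these vectors converge to `x`, which thus lies in the closure `Hs`.
-/

open ContinuousLinearMap Filter Topology

theorem sub_pow_apply_pow_mem_iSup_map_ker {R M : Type*} [Semiring R] [TopologicalSpace M]
    [AddCommGroup M] [Module R M] {A B : M →L[R] M} (hBA : B * A = 1) (x : M) (m : ℕ) :
    x - (A ^ m) ((B ^ m) x) ∈
      ⨆ j : ℕ, Submodule.map (A ^ j).toLinearMap (LinearMap.ker B.toLinearMap) := by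
  induction m with
  | zero => simp
  | succ n ih =>
    set y := (B ^ n) x
    have hy : y - A (B y) ∈ LinearMap.ker B.toLinearMap := by
      have hBAy : B (A (B y)) = B y := DFunLike.congr_fun hBA (B y)
      simp [hBAy]
    have hstep : x - (A ^ (n + 1)) ((B ^ (n + 1)) x) = (x - (A ^ n) y) + (A ^ n) (y - A (B y)) := by
      rw [pow_succ A, pow_succ' B, map_sub]
      simp only [mul_apply_eq_comp, y]
      abel
    rw [hstep]
    exact add_mem ih (Submodule.mem_iSup_of_mem n ⟨_, hy, rfl⟩)

theorem norm_pow_apply_of_adjoint_mul_self {𝕜 H : Type*} [RCLike 𝕜] [NormedAddCommGroup H]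
    [InnerProductSpace 𝕜 H] [CompleteSpace H] {V : H →L[𝕜] H} (hV : adjoint V * V = 1)
    (m : ℕ) (z : H) : ‖(V ^ m) z‖ = ‖z‖ := by
  have hnorm := (norm_map_iff_adjoint_comp_self V).mpr hV
  induction m generalizing z with
  | zero => simp
  | succ n ih => rw [pow_succ', mul_apply_eq_comp, hnorm, ih]

theorem stmt_14_general {H : Type*} [NormedAddCommGroup H] [InnerProductSpace ℂ H] [CompleteSpace H]
    (V : H →L[ℂ] H) (hV : adjoint V * V = 1)
    (Hs : Submodule ℂ H)
    (hHs : Hs = (⨆ j : ℕ,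
      Submodule.map (V ^ j).toLinearMap (LinearMap.ker (adjoint V).toLinearMap)).topologicalClosure)
    (S : Submodule ℂ H)
    (hshift : ∀ x ∈ S, Tendsto (fun m : ℕ => ‖((adjoint V) ^ m) x‖) atTop (𝓝 0)) :
    S ≤ Hs := by
  subst hHs
  intro x hx
  have hwandering : Tendsto (fun m : ℕ => (V ^ m) ((adjoint V ^ m) x)) atTop (𝓝 0) := by
    rw [tendsto_zero_iff_norm_tendsto_zero]
    simpa only [norm_pow_apply_of_adjoint_mul_self hV] using hshift x hx
  have hlim : Tendsto (fun m : ℕ => x - (V ^ m) ((adjoint V ^ m) x)) atTop (𝓝 x) := by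
    simpa using tendsto_const_nhds.sub hwandering
  exact mem_closure_of_tendsto hlim
    (Eventually.of_forall (sub_pow_apply_pow_mem_iSup_map_ker hV x))

theorem stmt_14 {H : Type*} [NormedAddCommGroup H] [InnerProductSpace ℂ H] [CompleteSpace H]
    (V : H →L[ℂ] H) (hV : adjoint V * V = 1)
    (Hs : Submodule ℂ H)
    (hHs : Hs = (⨆ j : ℕ,
      Submodule.map (V ^ j).toLinearMap (LinearMap.ker (adjoint V).toLinearMap)).topologicalClosure)
    (S : Submodule ℂ H) (hSclosed : IsClosed (S : Set H))
    (hSred : ∀ x ∈ S, V x ∈ S ∧ adjoint V x ∈ S)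
    (hshift : ∀ x ∈ S, Tendsto (fun m : ℕ => ‖((adjoint V) ^ m) x‖) atTop (𝓝 0)) :
    S ≤ Hs :=
  stmt_14_general V hV Hs hHs S hshift
end

section
/- Let U be a unitary and V1, V2 isometries on H, commuting with U, with V1* V2 = U* V2 V1*. For p,q,r,s ∈ ℕ define E_{pq,sr} = V1^p V2^q (1 − V1 V1*)(1 − V2 V2*) V2*^r V1*^s. Then E_{pq,sr}* = E_{sr,pq} and E_{pq,sr} E_{ij,lk} = δ_{si} δ_{rj} E_{pq,lk} for all indices. -/
open ContinuousLinearMap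

section Aux

open scoped InnerProductSpace

variable {H : Type*} [NormedAddCommGroup H] [InnerProductSpace ℂ H] [CompleteSpace H]

lemma aux_norm_le (V : H →L[ℂ] H) (hV : star V * V = 1) : ‖V‖ ≤ 1 := by
  rw [star_eq_adjoint] at hV
  refine opNorm_le_bound V zero_le_one fun x => ?_
  have h1 : adjoint V (V x) = x := by
    have := congrArg (fun A : H →L[ℂ] H => A x) hV
    simpa [mul_apply] using this
  have h : ⟪V x, V x⟫_ℂ = ⟪x, x⟫_ℂ := by
    rw [← adjoint_inner_right, h1]
  have hn : ‖V x‖ = ‖x‖ := by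
    have h2 : RCLike.re (K := ℂ) ⟪V x, V x⟫_ℂ = RCLike.re (K := ℂ) ⟪x, x⟫_ℂ := by rw [h]
    rw [inner_self_eq_norm_sq, inner_self_eq_norm_sq] at h2
    nlinarith [norm_nonneg (V x), norm_nonneg x]
  rw [hn, one_mul]

lemma aux_sa (T : H →L[ℂ] H) (h1 : T * T = T) (h2 : ‖T‖ ≤ 1) : star T = T := by
  have key : ∀ u : H, T u = u → adjoint T u = u := by
    intro u hu
    have hadj : ‖adjoint T‖ ≤ 1 := by
      rw [ContinuousLinearMap.adjoint.norm_map T]; exact h2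
    have hineq : ‖adjoint T u‖ ≤ ‖u‖ := by
      calc ‖adjoint T u‖ ≤ ‖adjoint T‖ * ‖u‖ := le_opNorm _ _
        _ ≤ 1 * ‖u‖ := mul_le_mul_of_nonneg_right hadj (norm_nonneg u)
        _ = ‖u‖ := one_mul _
    have hip : RCLike.re (K := ℂ) ⟪adjoint T u, u⟫_ℂ = ‖u‖ ^ 2 := by
      rw [adjoint_inner_left, hu]
      exact inner_self_eq_norm_sq (𝕜 := ℂ) u
    have hsq : ‖adjoint T u - u‖ ^ 2 ≤ 0 := by
      have hexp := norm_sub_sq (𝕜 := ℂ) (adjoint T u) u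
      rw [hexp, hip]
      nlinarith [hineq, norm_nonneg (adjoint T u), norm_nonneg u]
    have h0 : ‖adjoint T u - u‖ = 0 := by
      nlinarith [norm_nonneg (adjoint T u - u)]
    exact sub_eq_zero.mp (norm_eq_zero.mp h0)
  have h3 : star T * T = T := by
    rw [star_eq_adjoint]
    ext x
    refine key (T x) ?_
    have := congrArg (fun A : H →L[ℂ] H => A x) h1
    simpa [mul_apply] using this
  calc star T = star (star T * T) := by rw [h3]
    _ = star T * star (star T) := by rw [star_mul, star_star]
    _ = T := by rw [star_star, h3]

end Aux

set_option maxHeartbeats 1000000 in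
theorem stmt_16 {H : Type*} [NormedAddCommGroup H] [InnerProductSpace ℂ H] [CompleteSpace H]
    (U V1 V2 : H →L[ℂ] H)
    (hU1 : U * adjoint U = 1) (hU2 : adjoint U * U = 1)
    (hV1 : adjoint V1 * V1 = 1) (hV2 : adjoint V2 * V2 = 1)
    (hc1 : V1 * U = U * V1) (hc2 : V2 * U = U * V2)
    (ht : adjoint V1 * V2 = adjoint U * (V2 * adjoint V1))
    (E : ℕ → ℕ → ℕ → ℕ → (H →L[ℂ] H))
    (hE : ∀ p q s r, E p q s r =
      V1 ^ p * V2 ^ q * (1 - V1 * adjoint V1) * (1 - V2 * adjoint V2) *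
        (adjoint V2) ^ r * (adjoint V1) ^ s) :
    (∀ p q s r, adjoint (E p q s r) = E s r p q) ∧
      (∀ p q s r i j l k,
        E p q s r * E i j l k = if s = i ∧ r = j then E p q l k else 0) := by
  simp only [← star_eq_adjoint] at hU1 hU2 hV1 hV2 ht hE ⊢
  -- basic commutation facts
  have uc : ∀ W : H →L[ℂ] H, W * U = U * W → star U * W = W * star U := by
    intro W h
    calc star U * W = star U * W * (U * star U) := by rw [hU1, mul_one]
      _ = star U * (W * U) * star U := by noncomm_ring
      _ = star U * (U * W) * star U := by rw [h]
      _ = (star U * U) * (W * star U) := by noncomm_ring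
      _ = W * star U := by rw [hU2, one_mul]
  have c1 : star U * V1 = V1 * star U := uc V1 hc1
  have c2 : star U * V2 = V2 * star U := uc V2 hc2
  have s2 : star V2 * U = U * star V2 := by
    have h := congrArg star c2
    simpa only [star_mul, star_star] using h
  have t2 : star V2 * V1 = V1 * (star V2 * U) := by
    have h := congrArg star ht
    simp only [star_mul, star_star] at h
    rw [h, mul_assoc]
  -- projection facts
  have key1 : star V2 * ((V1 * star V1) * V2) = V1 * star V1 := by
    calc star V2 * ((V1 * star V1) * V2)
        = (star V2 * V1) * (star V1 * V2) := by noncomm_ring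
      _ = (V1 * (star V2 * U)) * (star U * (V2 * star V1)) := by rw [t2, ht]
      _ = V1 * star V2 * (U * star U) * V2 * star V1 := by noncomm_ring
      _ = V1 * (star V2 * V2) * star V1 := by rw [hU1]; noncomm_ring
      _ = V1 * star V1 := by rw [hV2, mul_one]
  have key2 : (V1 * star V1) * V2 * (V1 * star V1) = (V1 * star V1) * V2 := by
    calc (V1 * star V1) * V2 * (V1 * star V1)
        = V1 * (star V1 * V2) * (V1 * star V1) := by noncomm_ring
      _ = V1 * (star U * (V2 * star V1)) * (V1 * star V1) := by rw [ht]
      _ = V1 * star U * V2 * ((star V1 * V1) * star V1) := by noncomm_ring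
      _ = V1 * (star U * (V2 * star V1)) := by rw [hV1, one_mul]; noncomm_ring
      _ = V1 * (star V1 * V2) := by rw [← ht]
      _ = (V1 * star V1) * V2 := by noncomm_ring
  have Tidem : ((V1 * star V1) * (V2 * star V2)) * ((V1 * star V1) * (V2 * star V2))
      = (V1 * star V1) * (V2 * star V2) := by
    calc ((V1 * star V1) * (V2 * star V2)) * ((V1 * star V1) * (V2 * star V2))
        = (V1 * star V1) * V2 * (star V2 * ((V1 * star V1) * V2)) * star V2 := by noncomm_ring
      _ = (V1 * star V1) * V2 * (V1 * star V1) * star V2 := by rw [key1]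
      _ = ((V1 * star V1) * V2) * star V2 := by rw [key2]
      _ = (V1 * star V1) * (V2 * star V2) := by noncomm_ring
  have Tnorm : ‖(V1 * star V1) * (V2 * star V2)‖ ≤ 1 := by
    have n1 : ‖V1‖ ≤ 1 := aux_norm_le V1 hV1
    have n2 : ‖V2‖ ≤ 1 := aux_norm_le V2 hV2
    have m1 : ‖V1 * star V1‖ ≤ 1 := by
      calc ‖V1 * star V1‖ ≤ ‖V1‖ * ‖star V1‖ := norm_mul_le _ _
        _ = ‖V1‖ * ‖V1‖ := by rw [norm_star]
        _ ≤ 1 := by nlinarith [norm_nonneg V1]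
    have m2 : ‖V2 * star V2‖ ≤ 1 := by
      calc ‖V2 * star V2‖ ≤ ‖V2‖ * ‖star V2‖ := norm_mul_le _ _
        _ = ‖V2‖ * ‖V2‖ := by rw [norm_star]
        _ ≤ 1 := by nlinarith [norm_nonneg V2]
    calc ‖(V1 * star V1) * (V2 * star V2)‖ ≤ ‖V1 * star V1‖ * ‖V2 * star V2‖ := norm_mul_le _ _
      _ ≤ 1 := by nlinarith [norm_nonneg (V1 * star V1)]
  have comm : (V2 * star V2) * (V1 * star V1) = (V1 * star V1) * (V2 * star V2) := by
    have hsa := aux_sa _ Tidem Tnorm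
    have hst : star ((V1 * star V1) * (V2 * star V2)) = (V2 * star V2) * (V1 * star V1) := by
      simp only [star_mul, star_star]
    rw [hst] at hsa
    exact hsa
  have pcomm : (1 - V1 * star V1) * (1 - V2 * star V2)
      = (1 - V2 * star V2) * (1 - V1 * star V1) := by
    calc (1 - V1 * star V1) * (1 - V2 * star V2)
        = 1 - V1 * star V1 - V2 * star V2 + (V2 * star V2) * (V1 * star V1) := by
          rw [comm]; noncomm_ring
      _ = (1 - V2 * star V2) * (1 - V1 * star V1) := by noncomm_ring
  have pcommX : ∀ X : H →L[ℂ] H,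
      (1 - V2 * star V2) * ((1 - V1 * star V1) * X)
        = (1 - V1 * star V1) * ((1 - V2 * star V2) * X) := by
    intro X
    rw [← mul_assoc, ← pcomm, mul_assoc]
  have q1idem : (V1 * star V1) * (V1 * star V1) = V1 * star V1 := by
    calc (V1 * star V1) * (V1 * star V1) = V1 * ((star V1 * V1) * star V1) := by noncomm_ring
      _ = V1 * star V1 := by rw [hV1, one_mul]
  have q2idem : (V2 * star V2) * (V2 * star V2) = V2 * star V2 := by
    calc (V2 * star V2) * (V2 * star V2) = V2 * ((star V2 * V2) * star V2) := by noncomm_ring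
      _ = V2 * star V2 := by rw [hV2, one_mul]
  have p1idem : (1 - V1 * star V1) * (1 - V1 * star V1) = 1 - V1 * star V1 := by
    calc (1 - V1 * star V1) * (1 - V1 * star V1)
        = 1 - V1 * star V1 - V1 * star V1 + (V1 * star V1) * (V1 * star V1) := by noncomm_ring
      _ = 1 - V1 * star V1 := by rw [q1idem]; noncomm_ring
  have p2idem : (1 - V2 * star V2) * (1 - V2 * star V2) = 1 - V2 * star V2 := by
    calc (1 - V2 * star V2) * (1 - V2 * star V2)
        = 1 - V2 * star V2 - V2 * star V2 + (V2 * star V2) * (V2 * star V2) := by noncomm_ring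
      _ = 1 - V2 * star V2 := by rw [q2idem]; noncomm_ring
  have Pidem : ((1 - V1 * star V1) * (1 - V2 * star V2)) * ((1 - V1 * star V1) * (1 - V2 * star V2))
      = (1 - V1 * star V1) * (1 - V2 * star V2) := by
    calc ((1 - V1 * star V1) * (1 - V2 * star V2)) * ((1 - V1 * star V1) * (1 - V2 * star V2))
        = (1 - V1 * star V1) * ((1 - V2 * star V2) * (1 - V1 * star V1)) * (1 - V2 * star V2) := by
          noncomm_ring
      _ = (1 - V1 * star V1) * ((1 - V1 * star V1) * (1 - V2 * star V2)) * (1 - V2 * star V2) := by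
          rw [← pcomm]
      _ = ((1 - V1 * star V1) * (1 - V1 * star V1)) * ((1 - V2 * star V2) * (1 - V2 * star V2)) := by
          noncomm_ring
      _ = (1 - V1 * star V1) * (1 - V2 * star V2) := by rw [p1idem, p2idem]
  have PPX : ∀ X : H →L[ℂ] H,
      (1 - V1 * star V1) * ((1 - V2 * star V2) * ((1 - V1 * star V1) * ((1 - V2 * star V2) * X)))
        = (1 - V1 * star V1) * ((1 - V2 * star V2) * X) := by
    intro X
    have h : (((1 - V1 * star V1) * (1 - V2 * star V2)) * ((1 - V1 * star V1) * (1 - V2 * star V2))) * X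
        = ((1 - V1 * star V1) * (1 - V2 * star V2)) * X := by rw [Pidem]
    simpa only [mul_assoc] using h
  -- zero lemmas
  have z1 : (1 - V1 * star V1) * V1 = 0 := by
    calc (1 - V1 * star V1) * V1 = V1 - V1 * (star V1 * V1) := by noncomm_ring
      _ = 0 := by rw [hV1, mul_one, sub_self]
  have z1' : star V1 * (1 - V1 * star V1) = 0 := by
    calc star V1 * (1 - V1 * star V1) = star V1 - (star V1 * V1) * star V1 := by noncomm_ring
      _ = 0 := by rw [hV1, one_mul, sub_self]
  have z2 : (1 - V2 * star V2) * V2 = 0 := by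
    calc (1 - V2 * star V2) * V2 = V2 - V2 * (star V2 * V2) := by noncomm_ring
      _ = 0 := by rw [hV2, mul_one, sub_self]
  have z2' : star V2 * (1 - V2 * star V2) = 0 := by
    calc star V2 * (1 - V2 * star V2) = star V2 - (star V2 * V2) * star V2 := by noncomm_ring
      _ = 0 := by rw [hV2, one_mul, sub_self]
  have PV1X : ∀ X : H →L[ℂ] H,
      (1 - V1 * star V1) * ((1 - V2 * star V2) * (V1 * X)) = 0 := by
    intro X
    have h : (((1 - V1 * star V1) * (1 - V2 * star V2)) * V1) * X = 0 := by
      rw [pcomm, mul_assoc (1 - V2 * star V2) (1 - V1 * star V1) V1, z1, mul_zero, zero_mul]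
    simpa only [mul_assoc] using h
  have z2X : ∀ X : H →L[ℂ] H, (1 - V2 * star V2) * (V2 * X) = 0 := by
    intro X
    have h : ((1 - V2 * star V2) * V2) * X = 0 := by rw [z2, zero_mul]
    simpa only [mul_assoc] using h
  have V1pX : ∀ X : H →L[ℂ] H, star V1 * ((1 - V1 * star V1) * X) = 0 := by
    intro X
    have h : (star V1 * (1 - V1 * star V1)) * X = 0 := by rw [z1', zero_mul]
    simpa only [mul_assoc] using h
  have V2PX : ∀ X : H →L[ℂ] H,
      star V2 * ((1 - V1 * star V1) * ((1 - V2 * star V2) * X)) = 0 := by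
    intro X
    have h : (star V2 * ((1 - V1 * star V1) * (1 - V2 * star V2))) * X = 0 := by
      rw [pcomm, ← mul_assoc (star V2) (1 - V2 * star V2) (1 - V1 * star V1), z2', zero_mul,
        zero_mul]
    simpa only [mul_assoc] using h
  -- power lemmas
  have pow1 : ∀ n : ℕ, (star V1) ^ n * V1 ^ n = 1 := by
    intro n
    induction n with
    | zero => simp
    | succ n ih =>
      rw [pow_succ, pow_succ']
      calc (star V1) ^ n * star V1 * (V1 * V1 ^ n)
          = (star V1) ^ n * ((star V1 * V1) * V1 ^ n) := by noncomm_ring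
        _ = 1 := by rw [hV1, one_mul, ih]
  have pow2 : ∀ n : ℕ, (star V2) ^ n * V2 ^ n = 1 := by
    intro n
    induction n with
    | zero => simp
    | succ n ih =>
      rw [pow_succ, pow_succ']
      calc (star V2) ^ n * star V2 * (V2 * V2 ^ n)
          = (star V2) ^ n * ((star V2 * V2) * V2 ^ n) := by noncomm_ring
        _ = 1 := by rw [hV2, one_mul, ih]
  have cancel1X : ∀ (n : ℕ) (X : H →L[ℂ] H), (star V1) ^ n * (V1 ^ n * X) = X := by
    intro n X
    have h : ((star V1) ^ n * V1 ^ n) * X = X := by rw [pow1, one_mul]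
    simpa only [mul_assoc] using h
  have cancel2X : ∀ (n : ℕ) (X : H →L[ℂ] H), (star V2) ^ n * (V2 ^ n * X) = X := by
    intro n X
    have h : ((star V2) ^ n * V2 ^ n) * X = X := by rw [pow2, one_mul]
    simpa only [mul_assoc] using h
  -- swap lemmas
  have hswapUj : ∀ j : ℕ, V2 * (star U) ^ j = (star U) ^ j * V2 :=
    fun j => ((show Commute (star U) V2 from c2).pow_left j).symm
  have hswapUr : ∀ r : ℕ, U ^ r * star V2 = star V2 * U ^ r :=
    fun r => ((show Commute (star V2) U from s2).pow_right r).symm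
  have swapA : ∀ j : ℕ, star V1 * V2 ^ j = (star U) ^ j * (V2 ^ j * star V1) := by
    intro j
    induction j with
    | zero => simp
    | succ j ih =>
      calc star V1 * V2 ^ (j + 1) = star V1 * (V2 * V2 ^ j) := by rw [pow_succ']
        _ = (star V1 * V2) * V2 ^ j := by rw [mul_assoc]
        _ = (star U * (V2 * star V1)) * V2 ^ j := by rw [ht]
        _ = star U * (V2 * (star V1 * V2 ^ j)) := by noncomm_ring
        _ = star U * (V2 * ((star U) ^ j * (V2 ^ j * star V1))) := by rw [ih]
        _ = star U * ((V2 * (star U) ^ j) * (V2 ^ j * star V1)) := by noncomm_ring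
        _ = star U * (((star U) ^ j * V2) * (V2 ^ j * star V1)) := by rw [hswapUj]
        _ = (star U) ^ (j + 1) * (V2 ^ (j + 1) * star V1) := by
            rw [pow_succ' (star U), pow_succ' V2]; noncomm_ring
  have killAX : ∀ (j : ℕ) (X : H →L[ℂ] H),
      star V1 * (V2 ^ j * X) = (star U) ^ j * (V2 ^ j * (star V1 * X)) := by
    intro j X
    have h : (star V1 * V2 ^ j) * X = ((star U) ^ j * (V2 ^ j * star V1)) * X := by rw [swapA]
    simpa only [mul_assoc] using h
  have swapB : ∀ r : ℕ, (star V2) ^ r * V1 = V1 * ((star V2) ^ r * U ^ r) := by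
    intro r
    induction r with
    | zero => simp
    | succ r ih =>
      calc (star V2) ^ (r + 1) * V1 = (star V2) ^ r * (star V2 * V1) := by
            rw [pow_succ, mul_assoc]
        _ = (star V2) ^ r * (V1 * (star V2 * U)) := by rw [t2]
        _ = ((star V2) ^ r * V1) * (star V2 * U) := by noncomm_ring
        _ = (V1 * ((star V2) ^ r * U ^ r)) * (star V2 * U) := by rw [ih]
        _ = V1 * ((star V2) ^ r * ((U ^ r * star V2) * U)) := by noncomm_ring
        _ = V1 * ((star V2) ^ r * ((star V2 * U ^ r) * U)) := by rw [hswapUr]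
        _ = V1 * ((star V2) ^ (r + 1) * U ^ (r + 1)) := by
            rw [pow_succ (star V2), pow_succ U]; noncomm_ring
  have killBX : ∀ (r : ℕ) (X : H →L[ℂ] H),
      (star V2) ^ r * (V1 * X) = V1 * ((star V2) ^ r * (U ^ r * X)) := by
    intro r X
    have h : ((star V2) ^ r * V1) * X = (V1 * ((star V2) ^ r * U ^ r)) * X := by rw [swapB]
    simpa only [mul_assoc] using h
  -- the middle lemma
  have mid : ∀ (s r i j : ℕ) (X : H →L[ℂ] H),
      (1 - V1 * star V1) * ((1 - V2 * star V2) * ((star V2) ^ r * ((star V1) ^ s *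
        (V1 ^ i * (V2 ^ j * ((1 - V1 * star V1) * ((1 - V2 * star V2) * X)))))))
      = if s = i ∧ r = j then (1 - V1 * star V1) * ((1 - V2 * star V2) * X) else 0 := by
    intro s r i j X
    rcases lt_trichotomy s i with hsi | rfl | hsi
    · obtain ⟨a, rfl⟩ : ∃ a, i = s + (a + 1) := ⟨i - s - 1, by omega⟩
      rw [if_neg (by omega)]
      rw [pow_add V1 s (a + 1)]
      simp only [mul_assoc]
      rw [cancel1X, pow_succ' V1 a]
      simp only [mul_assoc]
      rw [killBX, PV1X]
    · rw [cancel1X]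
      rcases lt_trichotomy r j with hrj | rfl | hrj
      · obtain ⟨b, rfl⟩ : ∃ b, j = r + (b + 1) := ⟨j - r - 1, by omega⟩
        rw [if_neg (by omega)]
        rw [pow_add V2 r (b + 1)]
        simp only [mul_assoc]
        rw [cancel2X, pow_succ' V2 b]
        simp only [mul_assoc]
        rw [z2X, mul_zero]
      · rw [if_pos ⟨rfl, rfl⟩, cancel2X, PPX]
      · obtain ⟨b, rfl⟩ : ∃ b, r = j + (b + 1) := ⟨r - j - 1, by omega⟩
        rw [if_neg (by omega)]
        rw [show j + (b + 1) = (b + 1) + j from by omega, pow_add (star V2) (b + 1) j]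
        simp only [mul_assoc]
        rw [cancel2X, pow_succ (star V2) b]
        simp only [mul_assoc]
        rw [V2PX]
        simp only [mul_zero]
    · obtain ⟨b, rfl⟩ : ∃ b, s = i + (b + 1) := ⟨s - i - 1, by omega⟩
      rw [if_neg (by omega)]
      rw [show i + (b + 1) = (b + 1) + i from by omega, pow_add (star V1) (b + 1) i]
      simp only [mul_assoc]
      rw [cancel1X, pow_succ (star V1) b]
      simp only [mul_assoc]
      rw [killAX, V1pX]
      simp only [mul_zero]
  constructor
  · intro p q s r
    rw [hE p q s r, hE s r p q]
    simp only [star_mul, star_sub, star_one, star_star, star_pow, mul_assoc]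
    rw [pcommX]
  · intro p q s r i j l k
    rw [hE p q s r, hE i j l k]
    simp only [mul_assoc]
    rw [mid s r i j ((star V2) ^ k * (star V1) ^ l)]
    by_cases hc : s = i ∧ r = j
    · rw [if_pos hc, if_pos hc, hE p q l k]
      simp only [mul_assoc]
    · rw [if_neg hc, if_neg hc]
      simp only [mul_zero]
end

section
/- Let (V1,…,Vn) be a U_n-twisted isometry on H, A ⊆ {1,…,n}, and define the A-wandering subspace D_A = ⋂_{l ∈ ℕ^{A^c}} V_{A^c}^l (W_A), where W_A = ⋂_{i∈A} ker V_i* and V_{A^c}^l denotes the product of powers of the V_j with j ∉ A. Then D_A reduces V_j for every j ∉ A. -/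
/-!
Let `Z` be the commutant of `{V p, V p*}`. Every `U i j` lies in `Z`, and `Z` preserves
`W = ⋂_{i ∈ A} ker V i*`, as does `V j` for `j ∉ A`. The relation `V i* V j = U i j* V j V i*`
forces `V i V j = U i j V j V i`: both sides are isometries and the adjoint of the right one times
the left one is `1`. So `V j` and `V j*` can be pushed through the products
`Q l = ∏_{i ∉ A} V i ^ l i` at the cost of a factor in `Z`:
`V j Q l = Q l (z V j)` and `V j* Q (l + e j) = Q l z'`. Both `z V j` and `z'` preserve `W`,
hence `V j` and `V j*` map `D = ⋂_l Q l W` into itself.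
-/

open ContinuousLinearMap

theorem CStarRing.eq_of_star_mul_eq_one {E : Type*} [NormedRing E] [StarRing E] [CStarRing E]
    {x y : E} (hx : star x * x = 1) (hy : star y * y = 1) (hyx : star y * x = 1) : x = y := by
  have hxy : star x * y = 1 := by simpa using congrArg star hyx
  rw [← sub_eq_zero, ← CStarRing.star_mul_self_eq_zero_iff]
  simp only [star_sub, sub_mul, mul_sub, hx, hy, hyx, hxy, sub_self]

namespace Submonoid

variable {M : Type*} [Monoid M]

theorem commute_of_mem_centralizer_of_mem_closure {T : Set M} {z b : M}
    (hz : z ∈ centralizer T) (hb : b ∈ closure T) : Commute z b :=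
  mem_centralizer_iff.mp (closure_le_centralizer_centralizer T hb) z hz

theorem exists_mem_centralizer_mul_eq_of_mem_closure {T S : Set M} (hST : S ⊆ T) {a : M}
    (h : ∀ b ∈ S, ∃ z ∈ centralizer T, a * b = z * (b * a)) {b : M} (hb : b ∈ closure S) :
    ∃ z ∈ centralizer T, a * b = z * (b * a) := by
  induction hb using closure_induction with
  | mem b hb => exact h b hb
  | one => exact ⟨1, one_mem _, by simp⟩
  | mul b₁ b₂ hb₁ _ ih₁ ih₂ =>
    obtain ⟨z₁, hz₁, h₁⟩ := ih₁
    obtain ⟨z₂, hz₂, h₂⟩ := ih₂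
    have hc : Commute z₂ b₁ :=
      commute_of_mem_centralizer_of_mem_closure hz₂ (closure_mono hST hb₁)
    refine ⟨z₁ * z₂, mul_mem hz₁ hz₂, ?_⟩
    calc a * (b₁ * b₂) = z₁ * (b₁ * (a * b₂)) := by rw [← mul_assoc, h₁]; simp only [mul_assoc]
      _ = z₁ * z₂ * (b₁ * b₂ * a) := by
        rw [h₂, ← mul_assoc b₁, ← hc.eq]; simp only [mul_assoc]

end Submonoid

section TwistedIsometry

variable {R ι : Type*}

def starCommutant [Monoid R] [StarMul R] (V : ι → R) : Submonoid R :=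
  Submonoid.centralizer (Set.range V ∪ Set.range (star V))

def powProd [Monoid R] (V : ι → R) (L : List ι) (l : ι → ℕ) : R :=
  (L.map fun i => V i ^ l i).prod

section Monoid

variable [Monoid R] {V : ι → R}

theorem powProd_mem_closure (L : List ι) (l : ι → ℕ) :
    powProd V L l ∈ Submonoid.closure (Set.range V) :=
  Submonoid.list_prod_mem _ <| by
    simpa using fun i _ => pow_mem (Submonoid.subset_closure (Set.mem_range_self i)) (l i)

variable [StarMul R] {z : R}

theorem star_mem_starCommutant (hz : z ∈ starCommutant V) : star z ∈ starCommutant V := by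
  rw [starCommutant, Submonoid.mem_centralizer_iff] at hz ⊢
  rintro _ (⟨i, rfl⟩ | ⟨i, rfl⟩)
  · simpa using (congrArg star (hz _ (Or.inr ⟨i, rfl⟩))).symm
  · simpa using (congrArg star (hz _ (Or.inl ⟨i, rfl⟩))).symm

theorem commute_powProd (hz : z ∈ starCommutant V) (L : List ι) (l : ι → ℕ) :
    Commute z (powProd V L l) :=
  Submonoid.commute_of_mem_centralizer_of_mem_closure hz <|
    Submonoid.closure_mono Set.subset_union_left (powProd_mem_closure L l)

theorem star_mul_comm_of_mem_starCommutant (hz : z ∈ starCommutant V) (i : ι) :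
    star (V i) * z = z * star (V i) :=
  Submonoid.mem_centralizer_iff.mp hz _ (Or.inr ⟨i, rfl⟩)

variable {U : ι → ι → R}

theorem twist_mem_starCommutant (hUsym : ∀ i j, i ≠ j → U j i = star (U i j))
    (hVU : ∀ p s t, s ≠ t → V p * U s t = U s t * V p) {i j : ι} (h : i ≠ j) :
    U i j ∈ starCommutant V := by
  rw [starCommutant, Submonoid.mem_centralizer_iff]
  rintro _ (⟨p, rfl⟩ | ⟨p, rfl⟩)
  · exact hVU p i j h
  · simpa [hUsym i j h] using (congrArg star (hVU p j i h.symm)).symm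

theorem exists_mul_powProd_eq (hU : ∀ i j, i ≠ j → U i j ∈ starCommutant V)
    (hVV : ∀ i j, i ≠ j → V i * V j = U i j * (V j * V i)) (j : ι) (L : List ι) (l : ι → ℕ) :
    ∃ z ∈ starCommutant V, V j * powProd V L l = z * (powProd V L l * V j) := by
  refine Submonoid.exists_mem_centralizer_mul_eq_of_mem_closure Set.subset_union_left ?_
    (powProd_mem_closure L l)
  rintro _ ⟨i, rfl⟩
  by_cases h : j = i
  · exact ⟨1, one_mem _, by rw [h, one_mul]⟩
  · exact ⟨U j i, hU j i h, hVV j i h⟩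

theorem exists_star_mul_pow_eq (hU : ∀ i j, i ≠ j → U i j ∈ starCommutant V)
    (htw : ∀ i j, i ≠ j → star (V i) * V j = star (U i j) * (V j * star (V i)))
    {i j : ι} (h : j ≠ i) (m : ℕ) :
    ∃ z ∈ starCommutant V, star (V j) * V i ^ m = z * (V i ^ m * star (V j)) := by
  refine Submonoid.exists_mem_centralizer_mul_eq_of_mem_closure
    (T := Set.range V ∪ Set.range (star V)) (S := {V i})
    (Set.singleton_subset_iff.mpr (Or.inl (Set.mem_range_self i))) ?_
    (pow_mem (Submonoid.subset_closure (Set.mem_singleton (V i))) m)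
  rintro _ rfl
  exact ⟨star (U j i), star_mem_starCommutant (hU j i h), htw j i h⟩

theorem exists_star_mul_powProd_update_eq [DecidableEq ι]
    (hU : ∀ i j, i ≠ j → U i j ∈ starCommutant V) (hViso : ∀ i, star (V i) * V i = 1)
    (htw : ∀ i j, i ≠ j → star (V i) * V j = star (U i j) * (V j * star (V i)))
    {j : ι} (l : ι → ℕ) {L : List ι} (hL : L.Nodup) (hj : j ∈ L) :
    ∃ z ∈ starCommutant V,
      star (V j) * powProd V L (Function.update l j (l j + 1)) = z * powProd V L l := by
  induction L with
  | nil => simp at hj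
  | cons i L ih =>
    obtain ⟨hiL, hL⟩ := List.nodup_cons.mp hL
    simp only [powProd, List.map_cons, List.prod_cons] at ih ⊢
    by_cases hji : j = i
    · subst hji
      have hL' : L.map (fun k => V k ^ Function.update l j (l j + 1) k) =
          L.map (fun k => V k ^ l k) :=
        List.map_congr_left fun k hk => by
          rw [Function.update_of_ne (ne_of_mem_of_not_mem hk hiL)]
      refine ⟨1, one_mem _, ?_⟩
      rw [hL', Function.update_self, pow_succ', ← mul_assoc, ← mul_assoc, hViso, one_mul, one_mul]
    · obtain ⟨z₂, hz₂, h₂⟩ := ih hL ((List.mem_cons.mp hj).resolve_left hji)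
      obtain ⟨z₁, hz₁, h₁⟩ := exists_star_mul_pow_eq hU htw hji (l i)
      have hc : Commute z₂ (V i ^ l i) := by
        simpa [powProd] using commute_powProd hz₂ [i] l
      refine ⟨z₁ * z₂, mul_mem hz₁ hz₂, ?_⟩
      rw [Function.update_of_ne (Ne.symm hji), ← mul_assoc, h₁, mul_assoc, mul_assoc, h₂,
        ← mul_assoc (V i ^ l i), ← hc.eq]
      simp only [mul_assoc]

end Monoid

theorem twist_mul_comm [NormedRing R] [StarRing R] [CStarRing R] {U : ι → ι → R} {V : ι → R}
    (hUu : ∀ i j, i ≠ j → star (U i j) * U i j = 1) (hUsym : ∀ i j, i ≠ j → U j i = star (U i j))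
    (hViso : ∀ i, star (V i) * V i = 1) (hVU : ∀ p s t, s ≠ t → V p * U s t = U s t * V p)
    (htw : ∀ i j, i ≠ j → star (V i) * V j = star (U i j) * (V j * star (V i)))
    {i j : ι} (h : i ≠ j) : V i * V j = U i j * (V j * V i) := by
  have hU := twist_mem_starCommutant hUsym hVU h
  have hUi := star_mul_comm_of_mem_starCommutant hU i
  have hUi' := star_mul_comm_of_mem_starCommutant (star_mem_starCommutant hU) i
  have hUj' := star_mul_comm_of_mem_starCommutant (star_mem_starCommutant hU) j
  have hji : star (V j) * V i = U i j * (V i * star (V j)) := by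
    simpa [hUsym i j h] using htw j i h.symm
  refine CStarRing.eq_of_star_mul_eq_one ?_ ?_ ?_
  · rw [star_mul, mul_assoc, ← mul_assoc (star (V i)), hViso, one_mul, hViso]
  · rw [star_mul, mul_assoc, ← mul_assoc (star (U i j)), hUu i j h, one_mul, star_mul, mul_assoc,
      ← mul_assoc (star (V j)), hViso, one_mul, hViso]
  · calc star (U i j * (V j * V i)) * (V i * V j)
        = star (V i) * (star (V j) * star (U i j)) * (V i * V j) := by
          rw [star_mul, star_mul, mul_assoc (star (V i))]
      _ = star (U i j) * (star (V i) * (star (V j) * V i) * V j) := by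
        rw [hUj', ← mul_assoc (star (V i)), hUi']; simp only [mul_assoc]
      _ = star (U i j) * U i j * (star (V i) * V i) * (star (V j) * V j) := by
        rw [hji, ← mul_assoc (star (V i)), hUi]; simp only [mul_assoc]
      _ = 1 := by rw [hUu i j h, hViso, hViso, one_mul, one_mul]

end TwistedIsometry

namespace ContinuousLinearMap

variable {𝕜 E : Type*} [Semiring 𝕜] [TopologicalSpace E] [AddCommMonoid E] [Module 𝕜 E]

theorem apply_mem_iInf_map {κ : Type*} (Q : κ → E →L[𝕜] E) (W : Submodule 𝕜 E)
    (T : E →L[𝕜] E) (h : ∀ l, ∃ l' c, T * Q l' = Q l * c ∧ ∀ w ∈ W, c w ∈ W) {x : E}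
    (hx : x ∈ ⨅ l, W.map (Q l : E →ₗ[𝕜] E)) : T x ∈ ⨅ l, W.map (Q l : E →ₗ[𝕜] E) := by
  simp only [Submodule.mem_iInf, Submodule.mem_map] at hx ⊢
  intro l
  obtain ⟨l', c, hTQ, hc⟩ := h l
  obtain ⟨w, hw, rfl⟩ := hx l'
  exact ⟨c w, hc w hw, by simpa using congr($hTQ w).symm⟩

theorem apply_mem_iInf_ker {ι : Type*} {K : ι → E →L[𝕜] E} {A : Finset ι} {c : E →L[𝕜] E}
    (h : ∀ i ∈ A, ∃ c', K i * c = c' * K i) {w : E}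
    (hw : w ∈ ⨅ i ∈ A, LinearMap.ker (K i : E →ₗ[𝕜] E)) :
    c w ∈ ⨅ i ∈ A, LinearMap.ker (K i : E →ₗ[𝕜] E) := by
  simp only [Submodule.mem_iInf, LinearMap.mem_ker, coe_coe] at hw ⊢
  intro i hi
  obtain ⟨c', hc'⟩ := h i hi
  simpa [hw i hi] using congr($hc' w)

end ContinuousLinearMap

theorem stmt_17_general {H : Type*} [NormedAddCommGroup H] [InnerProductSpace ℂ H] [CompleteSpace H]
    {n : ℕ} (U : Fin n → Fin n → (H →L[ℂ] H)) (V : Fin n → (H →L[ℂ] H))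
    (hUu : ∀ i j, i ≠ j → U i j * adjoint (U i j) = 1 ∧ adjoint (U i j) * U i j = 1)
    (hUsym : ∀ i j, i ≠ j → U j i = adjoint (U i j))
    (hViso : ∀ i, adjoint (V i) * V i = 1)
    (hVU : ∀ p s t, s ≠ t → V p * U s t = U s t * V p)
    (htw : ∀ i j, i ≠ j → adjoint (V i) * V j = adjoint (U i j) * (V j * adjoint (V i)))
    (A : Finset (Fin n))
    (W : Submodule ℂ H) (hW : W = ⨅ i ∈ A, LinearMap.ker ((adjoint (V i) : H →L[ℂ] H) : H →ₗ[ℂ] H))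
    (D : Submodule ℂ H)
    (hD : D = ⨅ l : Fin n → ℕ,
      Submodule.map
        (((List.finRange n).filter (fun j => decide (j ∉ A))).map
          (fun j => V j ^ l j)).prod.toLinearMap W) :
    ∀ j ∉ A, ∀ x ∈ D, V j x ∈ D ∧ adjoint (V j) x ∈ D := by
  simp only [← star_eq_adjoint] at hUu hUsym hViso htw hW ⊢
  have hU : ∀ i j, i ≠ j → U i j ∈ starCommutant V :=
    fun i j => twist_mem_starCommutant hUsym hVU
  have hVV : ∀ i j, i ≠ j → V i * V j = U i j * (V j * V i) :=
    fun i j => twist_mul_comm (fun i j h => (hUu i j h).2) hUsym hViso hVU htw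
  have hZW : ∀ z ∈ starCommutant V, ∀ w ∈ W, z w ∈ W := fun z hz w hw => by
    subst hW
    exact apply_mem_iInf_ker (fun i _ => ⟨z, star_mul_comm_of_mem_starCommutant hz i⟩) hw
  have hVW : ∀ j ∉ A, ∀ w ∈ W, V j w ∈ W := fun j hj w hw => by
    subst hW
    exact apply_mem_iInf_ker (fun i hi => ⟨star (U i j) * V j,
      by rw [htw i j (ne_of_mem_of_not_mem hi hj), mul_assoc]⟩) hw
  intro j hj x hx
  set L := (List.finRange n).filter fun j => decide (j ∉ A)
  subst hD
  refine ⟨apply_mem_iInf_map (powProd V L) W _ (fun l => ?_) hx,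
    apply_mem_iInf_map (powProd V L) W _ (fun l => ?_) hx⟩
  · obtain ⟨z, hz, hVQ⟩ := exists_mul_powProd_eq hU hVV j L l
    refine ⟨l, z * V j, ?_, fun w hw => hZW z hz _ (hVW j hj w hw)⟩
    rw [hVQ, ← mul_assoc, (commute_powProd hz L l).eq, mul_assoc]
  · have hjL : j ∈ L := List.mem_filter.mpr ⟨List.mem_finRange j, decide_eq_true hj⟩
    obtain ⟨z, hz, hVQ⟩ := exists_star_mul_powProd_update_eq hU hViso htw l
      ((List.nodup_finRange n).filter _) hjL
    exact ⟨_, z, by rw [hVQ, (commute_powProd hz L l).eq], hZW z hz⟩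

theorem stmt_17 {H : Type*} [NormedAddCommGroup H] [InnerProductSpace ℂ H] [CompleteSpace H]
    {n : ℕ} (U : Fin n → Fin n → (H →L[ℂ] H)) (V : Fin n → (H →L[ℂ] H))
    (hUu : ∀ i j, i ≠ j → U i j * adjoint (U i j) = 1 ∧ adjoint (U i j) * U i j = 1)
    (hUsym : ∀ i j, i ≠ j → U j i = adjoint (U i j))
    (hUcomm : ∀ i j s t, i ≠ j → s ≠ t → U i j * U s t = U s t * U i j)
    (hViso : ∀ i, adjoint (V i) * V i = 1)
    (hVU : ∀ p s t, s ≠ t → V p * U s t = U s t * V p)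
    (htw : ∀ i j, i ≠ j → adjoint (V i) * V j = adjoint (U i j) * (V j * adjoint (V i)))
    (A : Finset (Fin n))
    (W : Submodule ℂ H) (hW : W = ⨅ i ∈ A, LinearMap.ker ((adjoint (V i) : H →L[ℂ] H) : H →ₗ[ℂ] H))
    (D : Submodule ℂ H)
    (hD : D = ⨅ l : Fin n → ℕ,
      Submodule.map
        (((List.finRange n).filter (fun j => decide (j ∉ A))).map
          (fun j => V j ^ l j)).prod.toLinearMap W) :
    ∀ j ∉ A, ∀ x ∈ D, V j x ∈ D ∧ adjoint (V j) x ∈ D :=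
  stmt_17_general U V hUu hUsym hViso hVU htw A W hW D hD
end

section
/- Let (V1,…,Vn) be a U_n-twisted isometry on H and A ⊆ {1,…,n}. The A-wandering subspace D_A = ⋂_{l} V_{A^c}^l(W_A) reduces every U_{st} (s ≠ t), and U_{st}(D_A) = D_A. -/
/-!
Since `U s t` is unitary and commutes with every `V p`, its adjoint commutes with every `V p`
as well, and taking adjoints shows that both also commute with every `adjoint (V p)`. An operator
commuting with all `V p` and `adjoint (V p)` preserves each `ker (adjoint (V i))` and commutes with
each monomial `V_{Aᶜ}^l`, so it leaves `D_A = wanderingSubspace V A` invariant. Invariance of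
`D_A` under `U s t` and under its inverse `adjoint (U s t)` gives `U s t (D_A) = D_A`.
-/

open ContinuousLinearMap

namespace Module.End

variable {R M : Type*} [Semiring R] [AddCommMonoid M] [Module R M] {f g : End R M}

lemma iInf_mem_invtSubmodule {ι : Sort*} {p : ι → Submodule R M}
    (hp : ∀ i, p i ∈ f.invtSubmodule) : ⨅ i, p i ∈ f.invtSubmodule := fun _ hx ↦
  Submodule.mem_iInf _ |>.2 fun i ↦ hp i (Submodule.mem_iInf _ |>.1 hx i)

lemma ker_mem_invtSubmodule_of_commute (h : Commute f g) : LinearMap.ker g ∈ f.invtSubmodule :=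
  fun x (hx : g x = 0) ↦ show g (f x) = 0 by rw [← mul_apply, ← h.eq, mul_apply, hx, map_zero]

lemma map_mem_invtSubmodule_of_commute {p : Submodule R M} (h : Commute f g)
    (hp : p ∈ f.invtSubmodule) : p.map g ∈ f.invtSubmodule := by
  rintro _ ⟨y, hy, rfl⟩
  exact ⟨f y, hp hy, by rw [← mul_apply, ← h.eq, mul_apply]⟩

lemma map_eq_of_mem_invtSubmodule_of_mul_eq_one {p : Submodule R M} (hfg : f * g = 1)
    (hf : p ∈ f.invtSubmodule) (hg : p ∈ g.invtSubmodule) : p.map f = p :=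
  le_antisymm ((mem_invtSubmodule_iff_map_le f).1 hf) fun x hx ↦
    ⟨g x, hg hx, by rw [← mul_apply, hfg, one_apply]⟩

end Module.End

lemma Commute.star_left_of_mem_unitary {R : Type*} [Monoid R] [StarMul R] {u a : R}
    (hu : u ∈ unitary R) (h : Commute u a) : Commute (star u) a :=
  Commute.units_inv_left (u := Unitary.toUnits ⟨u, hu⟩) h

def complMonomial {R : Type*} [Monoid R] {n : ℕ} (V : Fin n → R) (A : Finset (Fin n))
    (l : Fin n → ℕ) : R :=
  (((List.finRange n).filter (fun j => decide (j ∉ A))).map (fun j => V j ^ l j)).prod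

lemma commute_complMonomial {R : Type*} [Monoid R] {n : ℕ} {V : Fin n → R} {w : R}
    (hV : ∀ p, Commute w (V p)) (A : Finset (Fin n)) (l : Fin n → ℕ) :
    Commute w (complMonomial V A l) :=
  Commute.list_prod_right _ _ fun _ hx ↦ by
    obtain ⟨j, -, rfl⟩ := List.mem_map.1 hx
    exact (hV j).pow_right _

noncomputable section

variable {𝕜 H : Type*} [RCLike 𝕜] [NormedAddCommGroup H] [InnerProductSpace 𝕜 H] [CompleteSpace H]
  {n : ℕ}

def jointKerAdjoint (V : Fin n → H →L[𝕜] H) (A : Finset (Fin n)) : Submodule 𝕜 H :=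
  ⨅ i ∈ A, LinearMap.ker (adjoint (V i)).toLinearMap

def wanderingSubspace (V : Fin n → H →L[𝕜] H) (A : Finset (Fin n)) : Submodule 𝕜 H :=
  ⨅ l : Fin n → ℕ, (jointKerAdjoint V A).map (complMonomial V A l).toLinearMap

lemma wanderingSubspace_mem_invtSubmodule {V : Fin n → H →L[𝕜] H} {w : H →L[𝕜] H}
    (hV : ∀ p, Commute w (V p)) (hV' : ∀ p, Commute w (adjoint (V p))) (A : Finset (Fin n)) :
    wanderingSubspace V A ∈ Module.End.invtSubmodule (w : H →ₗ[𝕜] H) := by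
  have hW : jointKerAdjoint V A ∈ Module.End.invtSubmodule (w : H →ₗ[𝕜] H) :=
    Module.End.iInf_mem_invtSubmodule fun i ↦ Module.End.iInf_mem_invtSubmodule fun _ ↦
      Module.End.ker_mem_invtSubmodule_of_commute ((hV' i).map toLinearMapRingHom)
  exact Module.End.iInf_mem_invtSubmodule fun l ↦ Module.End.map_mem_invtSubmodule_of_commute
    ((commute_complMonomial hV A l).map toLinearMapRingHom) hW

end

theorem stmt_18_general {H : Type*} [NormedAddCommGroup H] [InnerProductSpace ℂ H] [CompleteSpace H]
    {n : ℕ} (U : Fin n → Fin n → (H →L[ℂ] H)) (V : Fin n → (H →L[ℂ] H))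
    (hUu : ∀ i j, i ≠ j → U i j * adjoint (U i j) = 1 ∧ adjoint (U i j) * U i j = 1)
    (hVU : ∀ p s t, s ≠ t → V p * U s t = U s t * V p)
    (A : Finset (Fin n))
    (W : Submodule ℂ H) (hW : W = ⨅ i ∈ A, LinearMap.ker (adjoint (V i)).toLinearMap)
    (D : Submodule ℂ H)
    (hD : D = ⨅ l : Fin n → ℕ,
      Submodule.map
        (((List.finRange n).filter (fun j => decide (j ∉ A))).map
          (fun j => V j ^ l j)).prod.toLinearMap W) :
    ∀ s t, s ≠ t →
      (∀ x ∈ D, U s t x ∈ D ∧ adjoint (U s t) x ∈ D) ∧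
        Submodule.map (U s t).toLinearMap D = D := by
  intro s t hst
  subst hW hD
  obtain ⟨hmul, hmul'⟩ := hUu s t hst
  have hunitary : U s t ∈ unitary (H →L[ℂ] H) := Unitary.mem_iff.2 ⟨hmul', hmul⟩
  have hcomm : ∀ p, Commute (U s t) (V p) := fun p ↦ (hVU p s t hst).symm
  have hcomm' : ∀ p, Commute (adjoint (U s t)) (V p) := fun p ↦
    (hcomm p).star_left_of_mem_unitary hunitary
  have hinv := wanderingSubspace_mem_invtSubmodule hcomm (fun p ↦ (hcomm' p).star_right) A
  have hinv' := wanderingSubspace_mem_invtSubmodule hcomm' (fun p ↦ (hcomm p).star_star) A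
  refine ⟨fun x hx ↦ ⟨hinv hx, hinv' hx⟩, ?_⟩
  exact Module.End.map_eq_of_mem_invtSubmodule_of_mul_eq_one
    (congrArg toLinearMapRingHom hmul) hinv hinv'

theorem stmt_18 {H : Type*} [NormedAddCommGroup H] [InnerProductSpace ℂ H] [CompleteSpace H]
    {n : ℕ} (U : Fin n → Fin n → (H →L[ℂ] H)) (V : Fin n → (H →L[ℂ] H))
    (hUu : ∀ i j, i ≠ j → U i j * adjoint (U i j) = 1 ∧ adjoint (U i j) * U i j = 1)
    (hUsym : ∀ i j, i ≠ j → U j i = adjoint (U i j))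
    (hUcomm : ∀ i j s t, i ≠ j → s ≠ t → U i j * U s t = U s t * U i j)
    (hViso : ∀ i, adjoint (V i) * V i = 1)
    (hVU : ∀ p s t, s ≠ t → V p * U s t = U s t * V p)
    (htw : ∀ i j, i ≠ j → adjoint (V i) * V j = adjoint (U i j) * (V j * adjoint (V i)))
    (A : Finset (Fin n))
    (W : Submodule ℂ H) (hW : W = ⨅ i ∈ A, LinearMap.ker (adjoint (V i)).toLinearMap)
    (D : Submodule ℂ H)
    (hD : D = ⨅ l : Fin n → ℕ,
      Submodule.map
        (((List.finRange n).filter (fun j => decide (j ∉ A))).map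
          (fun j => V j ^ l j)).prod.toLinearMap W) :
    ∀ s t, s ≠ t →
      (∀ x ∈ D, U s t x ∈ D ∧ adjoint (U s t) x ∈ D) ∧
        Submodule.map (U s t).toLinearMap D = D :=
  stmt_18_general U V hUu hVU A W hW D hD
end
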